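/- Let M₁ and M₂ be finite automata over Σ recognizing languages Init and Bad, τ a finite length-preserving transducer over Σ, and Φ their first-order encoding. If r_τ*(Init) ∩ Bad ≠ ∅, then the sentence ∃x (R(x) ∧ Bad(x)) is a semantic consequence of Φ. Consequently, if some first-order structure satisfies Φ and ¬∃x (R(x) ∧ Bad(x)), then r_τ*(Init) ∩ Bad = ∅. -/

import Mathlib

/-- A finite automaton over the alphabet `A`: a finite state set, a set of
transitions, an initial state and a set of final states. -/
structure FA (A : Type) : Type 1 where
  State : Type
  fin : Finite State
  delta : Set (State × A × State)
  start : State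
  final : Set State

/-- The extended transition relation `q →^w q'` of a finite automaton: the
least relation containing `q →^ε q`, the one-letter transitions, and closed
under appending a letter. -/
inductive FA.Ext {A : Type} (M : FA A) : M.State → List A → M.State → Prop
  | refl (q : M.State) : FA.Ext M q [] q
  | step {q : M.State} {w : List A} {q' : M.State} {a : A} {q'' : M.State} :
      FA.Ext M q w q' → (q', a, q'') ∈ M.delta → FA.Ext M q (w ++ [a]) q''

/-- The language recognized by a finite automaton:
`L(M) = {w | ∃ q' ∈ F, q₀ →^w q'}`. -/
def FA.lang {A : Type} (M : FA A) : Set (List A) :=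
  {w | ∃ q ∈ M.final, M.Ext M.start w q}

/-- A finite length-preserving transducer over the alphabet `A`. -/
structure FT (A : Type) : Type 1 where
  State : Type
  fin : Finite State
  delta : Set (State × A × A × State)
  start : State
  final : Set State

/-- The extended transition relation `q →^{w,u} q'` of a transducer: the least
relation containing `q →^{ε,ε} q`, the one-letter transitions, and closed under
appending a pair of letters. -/
inductive FT.Ext {A : Type} (t : FT A) :
    t.State → List A → List A → t.State → Prop
  | refl (q : t.State) : FT.Ext t q [] [] q
  | step {q : t.State} {w u : List A} {q' : t.State} {a b : A} {q'' : t.State} :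
      FT.Ext t q w u q' → (q', a, b, q'') ∈ t.delta →
      FT.Ext t q (w ++ [a]) (u ++ [b]) q''

/-- The relation `r_τ = {⟨w,u⟩ | ∃ q' ∈ F, q₀ →^{w,u} q'}` induced by a
transducer. -/
def FT.rel {A : Type} (t : FT A) (w u : List A) : Prop :=
  ∃ q ∈ t.final, t.Ext t.start w u q

/-- Interpretation `[t_w]` of the closed term `t_w = s₁ * ⋯ * sₙ` (with
`t_ε = e`) in a structure with domain `D`. -/
def wordVal {A D : Type} (mul : D → D → D) (e : D) (ca : A → D) : List A → D
  | [] => e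
  | [a] => ca a
  | a :: b :: rest => mul (ca a) (wordVal mul e ca (b :: rest))

/-- A first-order structure (domain `D`, binary operation `mul`, constants `e`,
`ca a` for letters, `c1 q`, `c2 q`, `ct q` for automata/transducer states, and
predicates `RR`, `InitP`, `BadP`, `TransP`, `T3`, `T4`) satisfies all formulas
of the encoding `Φ` of the automata `M1`, `M2` and the transducer `t`. -/
def SatRMC {A : Type} (M1 M2 : FA A) (t : FT A) {D : Type}
    (mul : D → D → D) (e : D) (ca : A → D)
    (c1 : M1.State → D) (c2 : M2.State → D) (ct : t.State → D)
    (RR InitP BadP : D → Prop) (TransP : D → D → Prop)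
    (T3 : D → D → D → Prop) (T4 : D → D → D → D → Prop) : Prop :=
  -- (1) associativity
  (∀ x y z : D, mul (mul x y) z = mul x (mul y z)) ∧
  -- (2) T³(q, e, q) for all q ∈ Q₁ ∪ Q₂
  (∀ q : M1.State, T3 (c1 q) e (c1 q)) ∧
  (∀ q : M2.State, T3 (c2 q) e (c2 q)) ∧
  -- (3) T³(q, a, q') for all (q, a, q') ∈ δ₁ ∪ δ₂
  (∀ q a q', (q, a, q') ∈ M1.delta → T3 (c1 q) (ca a) (c1 q')) ∧
  (∀ q a q', (q, a, q') ∈ M2.delta → T3 (c2 q) (ca a) (c2 q')) ∧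
  -- (4)
  (∀ x y z v w : D, T3 x y z → T3 z v w → T3 x (mul y v) w) ∧
  -- (5)
  (∀ x : D, (∃ q ∈ M1.final, T3 (c1 M1.start) x (c1 q)) → InitP x) ∧
  -- (6)
  (∀ x : D, (∃ q ∈ M2.final, T3 (c2 M2.start) x (c2 q)) → BadP x) ∧
  -- (7)
  (∀ x : D, T4 x e e x) ∧
  -- (8)
  (∀ q a b q', (q, a, b, q') ∈ t.delta → T4 (ct q) (ca a) (ca b) (ct q')) ∧
  -- (9)
  (∀ x y z v y' z' w : D,
      T4 x y z v → T4 v y' z' w → T4 x (mul y y') (mul z z') w) ∧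
  -- (10)
  (∀ x y : D, TransP x y ↔ ∃ q ∈ t.final, T4 (ct t.start) x y (ct q)) ∧
  -- (11)
  (∀ x : D, InitP x → RR x) ∧
  -- (12)
  (∀ x y : D, RR x → TransP x y → RR y)

/-
An automaton run or transducer run over a word `w` is read off, letter by letter, as a derivation
of `T³` resp. `T⁴` facts about the term `t_w`; associativity lets each appended letter be absorbed
into `t_w`. Hence in any model of `Φ` the value of `t_w` satisfies `Init`, `Bad` or `Trans` whenever
`w` is accepted by `M₁`, `M₂` or `τ`, and following an `r_τ`-path from `Init` to `Bad` via (11)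
and (12) yields an element satisfying `R` and `Bad`.
-/

theorem FA.Ext.eq_of_nil {A : Type} {M : FA A} {q q' : M.State} (h : M.Ext q [] q') : q = q' := by
  generalize hw : ([] : List A) = w at h
  cases h with
  | refl => rfl
  | step => simp at hw

theorem FT.Ext.length_eq {A : Type} {t : FT A} {q q' : t.State} {w u : List A}
    (h : t.Ext q w u q') : w.length = u.length := by
  induction h with
  | refl => rfl
  | step _ _ ih => simp [ih]

theorem FT.Ext.eq_of_nil {A : Type} {t : FT A} {q q' : t.State} {u : List A}
    (h : t.Ext q [] u q') : q = q' ∧ u = [] := by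
  generalize hw : ([] : List A) = w at h
  cases h with
  | refl => exact ⟨rfl, rfl⟩
  | step => simp at hw

section runs

variable {A D : Type} {mul : D → D → D} {e : D} {ca : A → D}

theorem wordVal_append_singleton (assoc : ∀ x y z : D, mul (mul x y) z = mul x (mul y z))
    (a : A) :
    ∀ {w : List A}, w ≠ [] → wordVal mul e ca (w ++ [a]) = mul (wordVal mul e ca w) (ca a)
  | [b], _ => rfl
  | b :: c :: rest, _ => by
    change mul (ca b) (wordVal mul e ca (c :: rest ++ [a])) = mul (mul (ca b) _) (ca a)
    rw [wordVal_append_singleton assoc a (List.cons_ne_nil c rest), assoc]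

theorem FA.Ext.T3_wordVal {M : FA A} {c : M.State → D} {T3 : D → D → D → Prop}
    (assoc : ∀ x y z : D, mul (mul x y) z = mul x (mul y z))
    (T3_refl : ∀ q, T3 (c q) e (c q))
    (T3_delta : ∀ q a q', (q, a, q') ∈ M.delta → T3 (c q) (ca a) (c q'))
    (T3_trans : ∀ x y z v w : D, T3 x y z → T3 z v w → T3 x (mul y v) w)
    {q q' : M.State} {w : List A} (h : M.Ext q w q') :
    T3 (c q) (wordVal mul e ca w) (c q') := by
  induction h with
  | refl => exact T3_refl _
  | @step w p a p' run hδ ih =>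
    rcases eq_or_ne w [] with rfl | hw
    · rw [run.eq_of_nil]
      exact T3_delta _ _ _ hδ
    · rw [wordVal_append_singleton assoc a hw]
      exact T3_trans _ _ _ _ _ ih (T3_delta _ _ _ hδ)

theorem FT.Ext.T4_wordVal {t : FT A} {c : t.State → D} {T4 : D → D → D → D → Prop}
    (assoc : ∀ x y z : D, mul (mul x y) z = mul x (mul y z))
    (T4_refl : ∀ x, T4 x e e x)
    (T4_delta : ∀ q a b q', (q, a, b, q') ∈ t.delta → T4 (c q) (ca a) (ca b) (c q'))
    (T4_trans : ∀ x y z v y' z' w : D, T4 x y z v → T4 v y' z' w →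
      T4 x (mul y y') (mul z z') w)
    {q q' : t.State} {w u : List A} (h : t.Ext q w u q') :
    T4 (c q) (wordVal mul e ca w) (wordVal mul e ca u) (c q') := by
  induction h with
  | refl => exact T4_refl _
  | @step w u p a b p' run hδ ih =>
    rcases eq_or_ne w [] with rfl | hw
    · obtain ⟨rfl, rfl⟩ := run.eq_of_nil
      exact T4_delta _ _ _ _ hδ
    · have hu : u ≠ [] := by
        rw [← List.length_pos_iff, ← run.length_eq]
        exact List.length_pos_iff.mpr hw
      rw [wordVal_append_singleton assoc a hw, wordVal_append_singleton assoc b hu]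
      exact T4_trans _ _ _ _ _ _ _ ih (T4_delta _ _ _ _ hδ)

end runs

namespace SatRMC

variable {A : Type} {M1 M2 : FA A} {t : FT A} {D : Type} {mul : D → D → D} {e : D}
  {ca : A → D} {c1 : M1.State → D} {c2 : M2.State → D} {ct : t.State → D}
  {RR InitP BadP : D → Prop} {TransP : D → D → Prop}
  {T3 : D → D → D → Prop} {T4 : D → D → D → D → Prop}

theorem initP_wordVal (h : SatRMC M1 M2 t mul e ca c1 c2 ct RR InitP BadP TransP T3 T4)
    {w : List A} (hw : w ∈ M1.lang) : InitP (wordVal mul e ca w) := by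
  obtain ⟨assoc, T3_refl, -, T3_delta, -, T3_trans, initP, -⟩ := h
  obtain ⟨q, hq, run⟩ := hw
  exact initP _ ⟨q, hq, run.T3_wordVal assoc T3_refl T3_delta T3_trans⟩

theorem badP_wordVal (h : SatRMC M1 M2 t mul e ca c1 c2 ct RR InitP BadP TransP T3 T4)
    {w : List A} (hw : w ∈ M2.lang) : BadP (wordVal mul e ca w) := by
  obtain ⟨assoc, -, T3_refl, -, T3_delta, T3_trans, -, badP, -⟩ := h
  obtain ⟨q, hq, run⟩ := hw
  exact badP _ ⟨q, hq, run.T3_wordVal assoc T3_refl T3_delta T3_trans⟩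

theorem transP_wordVal (h : SatRMC M1 M2 t mul e ca c1 c2 ct RR InitP BadP TransP T3 T4)
    {w u : List A} (hwu : t.rel w u) : TransP (wordVal mul e ca w) (wordVal mul e ca u) := by
  obtain ⟨assoc, -, -, -, -, -, -, -, T4_refl, T4_delta, T4_trans, transP, -⟩ := h
  obtain ⟨q, hq, run⟩ := hwu
  exact (transP _ _).mpr ⟨q, hq, run.T4_wordVal assoc T4_refl T4_delta T4_trans⟩

theorem RR_wordVal_of_reachable
    (h : SatRMC M1 M2 t mul e ca c1 c2 ct RR InitP BadP TransP T3 T4)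
    {w₀ w : List A} (hw₀ : w₀ ∈ M1.lang) (hreach : Relation.ReflTransGen t.rel w₀ w) :
    RR (wordVal mul e ca w) := by
  obtain ⟨-, -, -, -, -, -, -, -, -, -, -, -, initP_RR, RR_of_transP⟩ := id h
  induction hreach with
  | refl => exact initP_RR _ (h.initP_wordVal hw₀)
  | tail _ hstep ih => exact RR_of_transP _ _ ih (h.transP_wordVal hstep)

theorem exists_RR_and_badP (h : SatRMC M1 M2 t mul e ca c1 c2 ct RR InitP BadP TransP T3 T4)
    (hbad : ∃ w, (∃ w₀ ∈ M1.lang, Relation.ReflTransGen t.rel w₀ w) ∧ w ∈ M2.lang) :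
    ∃ x, RR x ∧ BadP x :=
  let ⟨_, ⟨_, hw₀, hreach⟩, hw⟩ := hbad
  ⟨_, h.RR_wordVal_of_reachable hw₀ hreach, h.badP_wordVal hw⟩

end SatRMC

theorem rmc_soundness_general {A : Type} (M1 M2 : FA A) (t : FT A) :
    ((∃ w, (∃ w0 ∈ M1.lang, Relation.ReflTransGen t.rel w0 w) ∧ w ∈ M2.lang) →
      ∀ (D : Type) (mul : D → D → D) (e : D) (ca : A → D)
        (c1 : M1.State → D) (c2 : M2.State → D) (ct : t.State → D)
        (RR InitP BadP : D → Prop) (TransP : D → D → Prop)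
        (T3 : D → D → D → Prop) (T4 : D → D → D → D → Prop),
        SatRMC M1 M2 t mul e ca c1 c2 ct RR InitP BadP TransP T3 T4 →
        ∃ x : D, RR x ∧ BadP x) ∧
    ((∃ (D : Type) (mul : D → D → D) (e : D) (ca : A → D)
        (c1 : M1.State → D) (c2 : M2.State → D) (ct : t.State → D)
        (RR InitP BadP : D → Prop) (TransP : D → D → Prop)
        (T3 : D → D → D → Prop) (T4 : D → D → D → D → Prop),
        SatRMC M1 M2 t mul e ca c1 c2 ct RR InitP BadP TransP T3 T4 ∧
          ¬ ∃ x : D, RR x ∧ BadP x) →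
      ¬ ∃ w, (∃ w0 ∈ M1.lang, Relation.ReflTransGen t.rel w0 w) ∧
          w ∈ M2.lang) := by
  refine ⟨fun hbad _ _ _ _ _ _ _ _ _ _ _ _ _ h => h.exists_RR_and_badP hbad, ?_⟩
  rintro ⟨_, _, _, _, _, _, _, _, _, _, _, _, _, h, hsafe⟩ hbad
  exact hsafe (h.exists_RR_and_badP hbad)

/-- if `r_τ*(Init) ∩ Bad ≠ ∅` then `∃x (R(x) ∧ Bad(x))` holds
in every first-order structure satisfying all formulas of `Φ`; consequently, if
some first-order structure satisfies `Φ` together with `¬∃x (R(x) ∧ Bad(x))`,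
then `r_τ*(Init) ∩ Bad = ∅`. -/
theorem rmc_soundness {A : Type} [Finite A] (M1 M2 : FA A) (t : FT A) :
    ((∃ w, (∃ w0 ∈ M1.lang, Relation.ReflTransGen t.rel w0 w) ∧ w ∈ M2.lang) →
      ∀ (D : Type) (mul : D → D → D) (e : D) (ca : A → D)
        (c1 : M1.State → D) (c2 : M2.State → D) (ct : t.State → D)
        (RR InitP BadP : D → Prop) (TransP : D → D → Prop)
        (T3 : D → D → D → Prop) (T4 : D → D → D → D → Prop),
        SatRMC M1 M2 t mul e ca c1 c2 ct RR InitP BadP TransP T3 T4 →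
        ∃ x : D, RR x ∧ BadP x) ∧
    ((∃ (D : Type) (mul : D → D → D) (e : D) (ca : A → D)
        (c1 : M1.State → D) (c2 : M2.State → D) (ct : t.State → D)
        (RR InitP BadP : D → Prop) (TransP : D → D → Prop)
        (T3 : D → D → D → Prop) (T4 : D → D → D → D → Prop),
        SatRMC M1 M2 t mul e ca c1 c2 ct RR InitP BadP TransP T3 T4 ∧
          ¬ ∃ x : D, RR x ∧ BadP x) →
      ¬ ∃ w, (∃ w0 ∈ M1.lang, Relation.ReflTransGen t.rel w0 w) ∧
          w ∈ M2.lang) :=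
  rmc_soundness_general M1 M2 t
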